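/- Let q ∈ (0,2], let f, g : ℝ → ℝ be continuous nondecreasing with f positive and lim_{t→+∞} g(t) < 0. Then the condition ∫_0^∞ dt / (∫_0^t exp(-2∫_s^t (g⁻(τ)/f(τ))^{2/q} f(τ) dτ) f(s) ds)^{1/2} = +∞ holds if and only if ∫_0^∞ [ 1/(t f(t))^{1/2} + 1/f(t)^{1/q} ] dt = +∞. -/

import Mathlib

open Real MeasureTheory Set Filter

/-!
Write `p = 2/q ≥ 1`, `w = (g⁻/f)^p f` and `D t = ∫₀ᵗ exp(-2∫ₛᵗ w) f(s) ds`. Since `g⁻` lies between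
`c = -lim g > 0` and `g⁻(0)`, and `x ↦ (c/x)^p x` is antitone, `w` is bounded below on `[0, t]` by
`(c/f t)^p f t` and above on `[t/2, t]` by `(g⁻(0)/f(t/2))^p f(t/2)`. The lower bound gives
`D t ≤ min (t f t) ((f t/c)^p)`. Integrating only over the final stretch of `[t/2, t]` on which
`∫ₛᵗ w ≤ 1`, the upper bound gives `D t ≥ e⁻² min ((t/2) f(t/2)) ((f(t/2)/g⁻(0))^p)`. So `1/√(D t)`
lies between constant multiples of `1/√(t f t) + 1/f(t)^(1/q)` and of the same expression at
`t/2`, and the substitution `t ↦ t/2` only rescales an integral over `(0, ∞)`.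
-/

lemma setLIntegral_Ioi_comp_mul_left {c : ℝ} (hc : 0 < c) (φ : ℝ → ENNReal) :
    ∫⁻ t in Ioi 0, φ (c * t) = ENNReal.ofReal c⁻¹ * ∫⁻ t in Ioi 0, φ t := by
  have hemb := measurableEmbedding_mulLeft₀ hc.ne'
  have hpre : (c * ·) ⁻¹' Ioi (0 : ℝ) = Ioi 0 := by
    ext t; simp [mul_pos_iff_of_pos_left hc]
  calc ∫⁻ t in Ioi 0, φ (c * t)
      = ∫⁻ t, φ t ∂((volume.map (c * ·)).restrict (Ioi 0)) := by
        rw [hemb.restrict_map, hemb.lintegral_map, hpre]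
    _ = ENNReal.ofReal c⁻¹ * ∫⁻ t in Ioi 0, φ t := by
        rw [Real.map_volume_mul_left hc.ne', abs_of_pos (inv_pos.2 hc), Measure.restrict_smul,
          lintegral_smul_measure, smul_eq_mul]

lemma lintegral_Ioi_ofReal_eq_top_of_le_mul_comp {a b : ℝ → ℝ} {C c : ℝ} (hC : 0 ≤ C)
    (hc : 0 < c) (hba : ∀ t > 0, b t ≤ C * a (c * t))
    (hb : ∫⁻ t in Ioi 0, ENNReal.ofReal (b t) = ⊤) :
    ∫⁻ t in Ioi 0, ENNReal.ofReal (a t) = ⊤ := by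
  have hle : ⊤ ≤ ENNReal.ofReal C * (ENNReal.ofReal c⁻¹ * ∫⁻ t in Ioi 0, ENNReal.ofReal (a t)) :=
    calc ⊤ = ∫⁻ t in Ioi 0, ENNReal.ofReal (b t) := hb.symm
      _ ≤ ∫⁻ t in Ioi 0, ENNReal.ofReal C * ENNReal.ofReal (a (c * t)) := by
        refine setLIntegral_mono' measurableSet_Ioi fun t ht => ?_
        rw [← ENNReal.ofReal_mul hC]
        exact ENNReal.ofReal_le_ofReal (hba t ht)
      _ = _ := by
        rw [lintegral_const_mul' _ _ ENNReal.ofReal_ne_top,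
          setLIntegral_Ioi_comp_mul_left hc (fun t => ENNReal.ofReal (a t))]
  by_contra ha
  exact (ENNReal.mul_ne_top ENNReal.ofReal_ne_top
    (ENNReal.mul_ne_top ENNReal.ofReal_ne_top ha)) (top_le_iff.1 hle)

noncomputable def dampedIntegral (f w : ℝ → ℝ) (t : ℝ) : ℝ :=
  ∫ s in (0 : ℝ)..t, exp (-2 * ∫ τ in s..t, w τ) * f s

section dampedIntegral

variable {f w : ℝ → ℝ}

lemma intervalIntegrable_dampedIntegrand (hf : Continuous f) (hw : Continuous w) (t a b : ℝ) :
    IntervalIntegrable (fun s => exp (-2 * ∫ τ in s..t, w τ) * f s) volume a b := by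
  have hcont : Continuous fun s => ∫ τ in s..t, w τ := by
    rw [show (fun s => ∫ τ in s..t, w τ) = fun s => -∫ τ in t..s, w τ from
      funext fun s => intervalIntegral.integral_symm _ _]
    exact (intervalIntegral.continuous_primitive (hw.intervalIntegrable) t).neg
  exact ((continuous_const.mul hcont).rexp.mul hf).intervalIntegrable a b

lemma dampedIntegral_le_mul_self (hf : Continuous f) (hfm : Monotone f) (hf0 : ∀ s, 0 ≤ f s)
    (hw : Continuous w) (hw0 : ∀ τ, 0 ≤ w τ) {t : ℝ} (ht : 0 ≤ t) :
    dampedIntegral f w t ≤ t * f t := by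
  have hle : dampedIntegral f w t ≤ ∫ _ in (0 : ℝ)..t, f t := by
    refine intervalIntegral.integral_mono_on ht (intervalIntegrable_dampedIntegrand hf hw t 0 t)
      intervalIntegrable_const fun s hs => ?_
    have hI : 0 ≤ ∫ τ in s..t, w τ := intervalIntegral.integral_nonneg hs.2 fun τ _ => hw0 τ
    calc exp (-2 * ∫ τ in s..t, w τ) * f s ≤ 1 * f t :=
          mul_le_mul (exp_le_one_iff.2 (by linarith)) (hfm hs.2) (hf0 s) zero_le_one
      _ = f t := one_mul _
  simpa using hle

lemma dampedIntegral_le_div (hf : Continuous f) (hfm : Monotone f) (hf0 : ∀ s, 0 ≤ f s)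
    (hw : Continuous w) {t β : ℝ} (ht : 0 ≤ t) (hβ : 0 < β) (hβw : ∀ τ ∈ Icc 0 t, β ≤ w τ) :
    dampedIntegral f w t ≤ f t / (2 * β) := by
  have hle : dampedIntegral f w t ≤ ∫ s in (0 : ℝ)..t, exp (2 * β * (s - t)) * f t := by
    refine intervalIntegral.integral_mono_on ht (intervalIntegrable_dampedIntegrand hf hw t 0 t)
      (Continuous.intervalIntegrable (by fun_prop) 0 t) fun s hs => ?_
    have hI : β * (t - s) ≤ ∫ τ in s..t, w τ := by
      have := intervalIntegral.integral_mono_on hs.2 intervalIntegrable_const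
        (hw.intervalIntegrable (μ := volume) s t) fun τ hτ => hβw τ ⟨hs.1.trans hτ.1, hτ.2⟩
      simp only [intervalIntegral.integral_const, smul_eq_mul] at this
      linarith
    exact mul_le_mul (exp_le_exp.2 (by linarith)) (hfm hs.2) (hf0 s) (exp_pos _).le
  have hexp : ∫ s in (0 : ℝ)..t, exp (2 * β * (s - t)) = (1 - exp (-(2 * β * t))) / (2 * β) := by
    rw [intervalIntegral.integral_eq_sub_of_hasDerivAt
      (f := fun s => exp (2 * β * (s - t)) / (2 * β)) (fun s _ => ?_)
      (Continuous.intervalIntegrable (by fun_prop) 0 t)]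
    · simp only [sub_self, mul_zero, exp_zero, zero_sub, mul_neg]
      ring
    · exact ((((hasDerivAt_id' s).sub_const t).const_mul (2 * β)).exp.div_const
        (2 * β)).congr_deriv (by field_simp)
  calc dampedIntegral f w t ≤ _ := hle
    _ = (1 - exp (-(2 * β * t))) / (2 * β) * f t := by
      rw [intervalIntegral.integral_mul_const, hexp]
    _ ≤ 1 / (2 * β) * f t := by
      gcongr
      · exact hf0 t
      · linarith [exp_pos (-(2 * β * t))]
    _ = f t / (2 * β) := by ring

lemma mul_min_le_dampedIntegral (hf : Continuous f) (hfm : Monotone f) (hf0 : ∀ s, 0 ≤ f s)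
    (hw : Continuous w) {a t M : ℝ} (ha : 0 ≤ a) (hat : a ≤ t) (hM : 0 < M)
    (hwM : ∀ τ ∈ Icc a t, w τ ≤ M) :
    exp (-2) * (f a * min (t - a) M⁻¹) ≤ dampedIntegral f w t := by
  set s₀ := t - min (t - a) M⁻¹
  have has₀ : a ≤ s₀ := by linarith [min_le_left (t - a) M⁻¹]
  have hs₀t : s₀ ≤ t := by linarith [le_min (sub_nonneg.2 hat) (inv_pos.2 hM).le]
  have hle : ∫ _ in s₀..t, exp (-2) * f a
      ≤ ∫ s in s₀..t, exp (-2 * ∫ τ in s..t, w τ) * f s := by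
    refine intervalIntegral.integral_mono_on hs₀t intervalIntegrable_const
      (intervalIntegrable_dampedIntegrand hf hw t s₀ t) fun s hs => ?_
    have hI : ∫ τ in s..t, w τ ≤ 1 := by
      have := intervalIntegral.integral_mono_on hs.2 (hw.intervalIntegrable (μ := volume) s t)
        intervalIntegrable_const fun τ hτ => hwM τ ⟨has₀.trans (hs.1.trans hτ.1), hτ.2⟩
      calc ∫ τ in s..t, w τ ≤ (t - s₀) * M := by
            simp only [intervalIntegral.integral_const, smul_eq_mul] at this
            nlinarith [hs.1]
        _ ≤ M⁻¹ * M := by gcongr; linarith [min_le_right (t - a) M⁻¹]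
        _ = 1 := inv_mul_cancel₀ hM.ne'
    exact mul_le_mul (exp_le_exp.2 (by linarith)) (hfm (has₀.trans hs.1)) (hf0 a) (exp_pos _).le
  calc exp (-2) * (f a * min (t - a) M⁻¹) = ∫ _ in s₀..t, exp (-2) * f a := by
        simp only [intervalIntegral.integral_const, smul_eq_mul, s₀]
        ring
    _ ≤ _ := hle
    _ ≤ dampedIntegral f w t :=
      intervalIntegral.integral_mono_interval (ha.trans has₀) hs₀t le_rfl
        (Eventually.of_forall fun s => mul_nonneg (exp_pos _).le (hf0 s))
        (intervalIntegrable_dampedIntegrand hf hw t 0 t)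

lemma dampedIntegral_pos (hf : Continuous f) (hfpos : ∀ s, 0 < f s) (hw : Continuous w) {t : ℝ}
    (ht : 0 < t) : 0 < dampedIntegral f w t :=
  intervalIntegral.intervalIntegral_pos_of_pos_on (intervalIntegrable_dampedIntegrand hf hw t 0 t)
    (fun s _ => mul_pos (exp_pos _) (hfpos s)) ht

end dampedIntegral

lemma div_rpow_mul_le_div_rpow_mul {p c c' a b : ℝ} (hp : 1 ≤ p) (hc : 0 ≤ c) (hcc' : c ≤ c')
    (hc' : 0 < c') (ha : 0 < a) (hab : a ≤ b) :
    (c / b) ^ p * b ≤ (c' / a) ^ p * a := by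
  have hb : 0 < b := ha.trans_le hab
  have key : ∀ x : ℝ, 0 < x → (c' / x) ^ p * x = (c' / x) ^ (p - 1) * c' := fun x hx => by
    rw [rpow_sub_one (by positivity)]
    field_simp
  calc (c / b) ^ p * b ≤ (c' / b) ^ p * b := by gcongr
    _ ≤ (c' / a) ^ p * a := by
      rw [key a ha, key b hb]
      gcongr

lemma sqrt_rpow_two_div {x : ℝ} (hx : 0 ≤ x) (q : ℝ) : √(x ^ (2 / q)) = x ^ (1 / q) := by
  rw [sqrt_eq_rpow, ← rpow_mul hx]
  ring_nf

lemma one_div_sqrt_le_of_min_le {x y D : ℝ} (hx : 0 < x) (hy : 0 < y)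
    (h : exp (-2) * min x y ≤ D) : 1 / √D ≤ exp 1 * (1 / √x + 1 / √y) := by
  have hm : 0 < min x y := lt_min hx hy
  have hsqrt : exp (-1) * √(min x y) ≤ √D := by
    calc exp (-1) * √(min x y) = √(exp (-2) * min x y) := by
          rw [show exp (-2) = exp (-1) ^ 2 by rw [← exp_nat_mul]; norm_num,
            sqrt_mul (by positivity), sqrt_sq (exp_pos _).le]
      _ ≤ √D := sqrt_le_sqrt h
  have hmin : 1 / √(min x y) ≤ 1 / √x + 1 / √y := by
    rcases min_choice x y with h | h <;> rw [h] <;>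
      linarith [one_div_nonneg.2 (sqrt_nonneg x), one_div_nonneg.2 (sqrt_nonneg y)]
  calc 1 / √D ≤ 1 / (exp (-1) * √(min x y)) :=
        one_div_le_one_div_of_le (by positivity) hsqrt
    _ = exp 1 * (1 / √(min x y)) := by rw [exp_neg]; field_simp
    _ ≤ exp 1 * (1 / √x + 1 / √y) := by gcongr

noncomputable def dampingRate (q : ℝ) (f u : ℝ → ℝ) (τ : ℝ) : ℝ :=
  (u τ / f τ) ^ (2 / q) * f τ

section dampingRate

variable {q : ℝ} {f u : ℝ → ℝ}

lemma continuous_dampingRate (hq : 0 < q) (hf : Continuous f) (hfpos : ∀ s, 0 < f s)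
    (hu : Continuous u) : Continuous (dampingRate q f u) :=
  ((hu.div hf fun τ => (hfpos τ).ne').rpow_const fun _ => Or.inr (by positivity)).mul hf

lemma one_div_rpow_dampedIntegral_le (hq : 0 < q) (hq2 : q ≤ 2) (hf : Continuous f)
    (hfpos : ∀ s, 0 < f s) (hfm : Monotone f) (hu : Continuous u) (hum : Antitone u)
    (hupos : ∀ τ, 0 < u τ) {t : ℝ} (ht : 0 < t) :
    1 / dampedIntegral f (dampingRate q f u) t ^ ((1 : ℝ) / 2)
      ≤ exp 1 * (1 + u 0 ^ (1 / q)) *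
        (1 / (2⁻¹ * t * f (2⁻¹ * t)) ^ ((1 : ℝ) / 2) + 1 / f (2⁻¹ * t) ^ (1 / q)) := by
  set a := 2⁻¹ * t
  have ha : 0 < a := by positivity
  have hat : a ≤ t := by simp only [a]; linarith
  have hfa := hfpos a
  have hG := hupos 0
  set M := (u 0 / f a) ^ (2 / q) * f a
  have hM : 0 < M := by positivity
  have hwM : ∀ τ ∈ Icc a t, dampingRate q f u τ ≤ M := fun τ hτ =>
    div_rpow_mul_le_div_rpow_mul ((one_le_div hq).2 hq2) (hupos τ).le (hum (ha.le.trans hτ.1))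
      hG hfa (hfm hτ.1)
  have hD := mul_min_le_dampedIntegral hf hfm (fun s => (hfpos s).le)
    (continuous_dampingRate hq hf hfpos hu) ha.le hat hM hwM
  have hmin : f a * min (t - a) M⁻¹ = min (a * f a) ((f a / u 0) ^ (2 / q)) := by
    rw [mul_min_of_nonneg _ _ hfa.le, show t - a = a by ring, mul_comm (f a) a]
    congr 1
    rw [mul_inv, ← inv_rpow (by positivity), inv_div]
    field_simp
  rw [hmin] at hD
  have hbound := one_div_sqrt_le_of_min_le (by positivity) (by positivity) hD
  rw [sqrt_rpow_two_div (by positivity), div_rpow hfa.le hG.le, one_div_div] at hbound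
  rw [← sqrt_eq_rpow, ← sqrt_eq_rpow]
  have hA : 0 ≤ 1 / √(a * f a) := by positivity
  have hB : 0 ≤ 1 / f a ^ (1 / q) := by positivity
  have hG' : 0 ≤ u 0 ^ (1 / q) := by positivity
  calc _ ≤ exp 1 * (1 / √(a * f a) + u 0 ^ (1 / q) / f a ^ (1 / q)) := hbound
    _ ≤ _ := by
      rw [mul_assoc (exp 1), div_eq_mul_one_div (u 0 ^ (1 / q))]
      refine mul_le_mul_of_nonneg_left ?_ (exp_pos 1).le
      nlinarith [mul_nonneg hG' hA]

lemma le_mul_one_div_rpow_dampedIntegral (hq : 0 < q) (hq2 : q ≤ 2) (hf : Continuous f)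
    (hfpos : ∀ s, 0 < f s) (hfm : Monotone f) (hu : Continuous u) {c : ℝ} (hc : 0 < c)
    (hcu : ∀ τ, c ≤ u τ) {t : ℝ} (ht : 0 < t) :
    1 / (t * f t) ^ ((1 : ℝ) / 2) + 1 / f t ^ (1 / q)
      ≤ (1 + 1 / c ^ (1 / q)) *
        (1 / dampedIntegral f (dampingRate q f u) t ^ ((1 : ℝ) / 2)) := by
  set D := dampedIntegral f (dampingRate q f u) t
  have hw := continuous_dampingRate hq hf hfpos hu
  have hf0 : ∀ s, 0 ≤ f s := fun s => (hfpos s).le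
  have hft := hfpos t
  have hD : 0 < D := dampedIntegral_pos hf hfpos hw ht
  have hDle₁ : D ≤ t * f t := dampedIntegral_le_mul_self hf hfm hf0 hw
    (fun τ => mul_nonneg (rpow_nonneg (div_nonneg (hc.le.trans (hcu τ)) (hf0 τ)) _) (hf0 τ))
    ht.le
  set β := (c / f t) ^ (2 / q) * f t
  have hβ : 0 < β := by positivity
  have hDle₂ : D ≤ (f t / c) ^ (2 / q) :=
    calc D ≤ f t / (2 * β) := dampedIntegral_le_div hf hfm hf0 hw ht.le hβ fun τ hτ =>
          div_rpow_mul_le_div_rpow_mul ((one_le_div hq).2 hq2) hc.le (hcu τ)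
            (hc.trans_le (hcu τ)) (hfpos τ) (hfm hτ.2)
      _ ≤ f t / β := by gcongr; linarith
      _ = (f t / c) ^ (2 / q) := by
        rw [← inv_div c, inv_rpow (by positivity)]
        field_simp
        exact mul_comm _ _
  rw [← sqrt_eq_rpow, ← sqrt_eq_rpow]
  have hsqrt : 0 < √D := sqrt_pos.2 hD
  have hterm₁ : 1 / √(t * f t) ≤ 1 / √D := one_div_le_one_div_of_le hsqrt (sqrt_le_sqrt hDle₁)
  have hterm₂ : c ^ (1 / q) / f t ^ (1 / q) ≤ 1 / √D := by
    rw [← one_div_div]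
    refine one_div_le_one_div_of_le hsqrt ?_
    rw [← div_rpow hft.le hc.le, ← sqrt_rpow_two_div (by positivity)]
    exact sqrt_le_sqrt hDle₂
  have hcq : 0 < c ^ (1 / q) := by positivity
  calc 1 / √(t * f t) + 1 / f t ^ (1 / q)
      = 1 / √(t * f t) + 1 / c ^ (1 / q) * (c ^ (1 / q) / f t ^ (1 / q)) := by
        field_simp
    _ ≤ 1 / √D + 1 / c ^ (1 / q) * (1 / √D) := by gcongr
    _ = _ := by ring

end dampingRate

theorem stmt17 (q : ℝ) (hq0 : 0 < q) (hq2 : q ≤ 2)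
    (f g : ℝ → ℝ)
    (hf : Continuous f) (hfpos : ∀ t, 0 < f t) (hfmono : Monotone f)
    (hg : Continuous g) (hgmono : Monotone g)
    (hglim : ∃ l : ℝ, l < 0 ∧ Filter.Tendsto g Filter.atTop (nhds l)) :
    (∫⁻ t in Set.Ioi (0 : ℝ),
        ENNReal.ofReal
          (1 / (∫ s in (0 : ℝ)..t,
              Real.exp (-2 * ∫ τ in s..t, (max (-g τ) 0 / f τ) ^ (2 / q) * f τ) * f s)
            ^ ((1 : ℝ) / 2)) = ⊤)
    ↔ (∫⁻ t in Set.Ioi (0 : ℝ),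
        ENNReal.ofReal
          (1 / (t * f t) ^ ((1 : ℝ) / 2) + 1 / f t ^ (1 / q)) = ⊤) := by
  obtain ⟨l, hl, hgl⟩ := hglim
  have hlu : ∀ τ, -l ≤ max (-g τ) 0 := fun τ =>
    le_max_of_le_left (neg_le_neg (hgmono.ge_of_tendsto hgl τ))
  have hu : Continuous fun τ => max (-g τ) 0 := hg.neg.max continuous_const
  have hum : Antitone fun τ => max (-g τ) 0 := fun a b hab =>
    max_le_max (neg_le_neg (hgmono hab)) le_rfl
  have hl' : 0 < -l := neg_pos.2 hl
  constructor
  · intro hD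
    exact lintegral_Ioi_ofReal_eq_top_of_le_mul_comp (by positivity) (by norm_num)
      (fun t ht => one_div_rpow_dampedIntegral_le hq0 hq2 hf hfpos hfmono hu hum
        (fun τ => hl'.trans_le (hlu τ)) ht) hD
  · intro hA
    refine lintegral_Ioi_ofReal_eq_top_of_le_mul_comp (C := 1 + 1 / (-l) ^ (1 / q))
      (by positivity) one_pos (fun t ht => ?_) hA
    rw [one_mul]
    exact le_mul_one_div_rpow_dampedIntegral hq0 hq2 hf hfpos hfmono hu hl' hlu ht
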